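/- Fix a real x > 0 and c > 0, and for each h > 0 let (Δ_1^h,…,Δ_m^h) be a random vector with the Dirichlet–negative-multinomial distribution DNM(x; cπ_0(h), cπ_1(h),…,cπ_m(h)). Let (k_1,…,k_m) be fixed nonnegative integers and set S̄ = {i ∈ {1,…,m} : k_i ≥ 1}. If |S̄| ≥ 2, then P((Δ_1^h,…,Δ_m^h) = (k_1,…,k_m)) = o(h) as h → 0+. If S̄ = {i} for a single index i with k_i = k ≥ 1, then P((Δ_1^h,…,Δ_m^h) = (k_1,…,k_m)) = c·[Γ(x+k)/(Γ(x)·k!)]·[Γ(x+c)·Γ(k)/Γ(x+k+c)]·r_i(t)·h + o(h) as h → 0+. -/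

import Mathlib

open scoped BigOperators
open Filter Topology Asymptotics

/-- The pmf of the Dirichlet–negative-multinomial distribution `DNM(x; α_0, α_1,…,α_m)`
on `ℕ^m`, obtained by compounding the negative-multinomial pmf
`[Γ(x+∑k)/(Γ(x)∏k_i!)]·Π_0^x·∏Π_i^{k_i}` with `(Π_0,…,Π_m) ~ Dir(α_0,…,α_m)`:
`P(k) = [Γ(x+∑k)/(Γ(x)∏k_i!)]·[Γ(c)/(Γ(α_0)∏Γ(α_i))]·[Γ(x+α_0)∏Γ(k_i+α_i)]/Γ(x+∑k+c)`
with `c = α_0 + ∑ α_i`. -/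
noncomputable def dnmPmf (m : ℕ) (x α0 : ℝ) (α : Fin m → ℝ) (k : Fin m → ℕ) : ℝ :=
  Real.Gamma (x + ∑ i, (k i : ℝ)) / (Real.Gamma x * ∏ i, ((k i).factorial : ℝ)) *
    (Real.Gamma (α0 + ∑ i, α i) / (Real.Gamma α0 * ∏ i, Real.Gamma (α i))) *
    ((Real.Gamma (x + α0) * ∏ i, Real.Gamma ((k i : ℝ) + α i)) /
      Real.Gamma (x + (∑ i, (k i : ℝ)) + (α0 + ∑ i, α i)))

/-- Expectation of `f(Δ_1,…,Δ_m)` under `DNM(x; α_0, α)`. -/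
noncomputable def dnmExp (m : ℕ) (x α0 : ℝ) (α : Fin m → ℝ) (f : (Fin m → ℕ) → ℝ) : ℝ :=
  ∑' k : Fin m → ℕ, f k * dnmPmf m x α0 α k

/-- `π_i(h) = (1 − exp(−∑_j ∫_t^{t+h} r_j(s) ds)) · r_i(t)/∑_j r_j(t)`, for `i = 1,…,m`. -/
noncomputable def pmain (m : ℕ) (r : Fin m → ℝ → ℝ) (t h : ℝ) (i : Fin m) : ℝ :=
  (1 - Real.exp (-(∑ j, ∫ s in t..(t + h), r j s))) * r i t / ∑ j, r j t

/-- `π_0(h) = 1 − ∑_{i=1}^m π_i(h)`. -/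
noncomputable def pzero (m : ℕ) (r : Fin m → ℝ → ℝ) (t h : ℝ) : ℝ :=
  1 - ∑ i, pmain m r t h i

/-!
For positive parameters `Γ(k + α) = Γ(α)·(α)ₖ` with the rising factorial `(α)ₖ`, so the DNM pmf
splits into a factor depending only on `k`, the ratio `Γ(c)Γ(x+α₀)/(Γ(α₀)Γ(x+∑k+c))`, and
`∏ᵢ (αᵢ)_{kᵢ}`. As `h → 0+`, `α₀ = cπ₀(h) → c`, while `αᵢ = cπᵢ(h) → 0` with `αᵢ/h → c·rᵢ(t)`
by the fundamental theorem of calculus. Since `(α)ₙ₊₁ = α·(α+1)ₙ`, every factor with `kᵢ ≥ 1` is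
of order `h`: a single one yields the rate `c·rᵢ(t)·(kᵢ-1)!`, two of them make the pmf `o(h)`.
-/

theorem Real.continuousAt_Gamma_of_pos {s : ℝ} (hs : 0 < s) : ContinuousAt Real.Gamma s :=
  (Real.differentiableAt_Gamma fun n => ((neg_nonpos.2 n.cast_nonneg).trans_lt hs).ne').continuousAt

open Polynomial in
theorem Real.Gamma_natCast_add_eq_mul_ascPochhammer {a : ℝ} (ha : 0 < a) (n : ℕ) :
    Real.Gamma (n + a) = Real.Gamma a * (ascPochhammer ℝ n).eval a := by
  induction n with
  | zero => simp
  | succ n ih =>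
    rw [Nat.cast_succ, add_right_comm, Real.Gamma_add_one (by positivity), ih,
      ascPochhammer_succ_eval]
    ring

open Polynomial in
theorem tendsto_ascPochhammer_succ_eval_div {l : Filter ℝ} {a : ℝ → ℝ} {μ : ℝ}
    (ha : Tendsto a l (𝓝 0)) (ha_div : Tendsto (fun h => a h / h) l (𝓝 μ)) (n : ℕ) :
    Tendsto (fun h => (ascPochhammer ℝ (n + 1)).eval (a h) / h) l (𝓝 (μ * n.factorial)) := by
  have hpoly : Tendsto (fun h => (ascPochhammer ℝ n).eval (a h + 1)) l (𝓝 (n.factorial : ℝ)) := by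
    simpa [Function.comp_def] using
      ((ascPochhammer ℝ n).continuous.tendsto 1).comp (by simpa using ha.add_const 1)
  refine (ha_div.mul hpoly).congr fun h => ?_
  simp only [ascPochhammer_succ_left, eval_mul, eval_X, eval_comp, eval_add, eval_one]
  ring

open Polynomial in
theorem tendsto_prod_ascPochhammer_eval_div {ι : Type*} [Fintype ι] [DecidableEq ι]
    {l : Filter ℝ} {a : ι → ℝ → ℝ} (ha : ∀ i, Tendsto (a i) l (𝓝 0)) {k : ι → ℕ} {i₀ : ι}
    {n : ℕ} (hk : k i₀ = n + 1) {μ : ℝ} (ha_div : Tendsto (fun h => a i₀ h / h) l (𝓝 μ)) :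
    Tendsto (fun h => (∏ i, (ascPochhammer ℝ (k i)).eval (a i h)) / h) l
      (𝓝 (μ * n.factorial * ∏ i ∈ Finset.univ.erase i₀, (ascPochhammer ℝ (k i)).eval 0)) := by
  have hrest := tendsto_finsetProd (Finset.univ.erase i₀) fun i _ =>
    ((ascPochhammer ℝ (k i)).continuous.tendsto 0).comp (ha i)
  refine ((hk ▸ tendsto_ascPochhammer_succ_eval_div (ha i₀) ha_div n).mul hrest).congr fun h => ?_
  rw [← Finset.mul_prod_erase _ _ (Finset.mem_univ i₀), hk]
  simp only [Function.comp_apply]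
  ring

theorem isLittleO_sub_mul_of_tendsto_div {f : ℝ → ℝ} {μ : ℝ}
    (hf : Tendsto (fun h => f h / h) (𝓝[>] 0) (𝓝 μ)) :
    (fun h => f h - μ * h) =o[𝓝[>] 0] fun h => h := by
  have hne : ∀ᶠ h in 𝓝[>] (0 : ℝ), h ≠ 0 := eventually_mem_nhdsWithin.mono fun h hh => hh.ne'
  refine (isLittleO_iff_tendsto' (hne.mono fun h h0 h1 => absurd h1 h0)).mpr ?_
  refine (by simpa using hf.sub_const μ : Tendsto (fun h => f h / h - μ) _ _).congr' ?_
  filter_upwards [hne] with h h0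
  rw [sub_div, mul_div_cancel_right₀ _ h0]

open Polynomial in
theorem dnmPmf_eq_mul_prod_ascPochhammer {m : ℕ} {x α0 : ℝ} {α : Fin m → ℝ} (hα0 : 0 < α0)
    (hα : ∀ i, 0 < α i) (k : Fin m → ℕ) :
    dnmPmf m x α0 α k =
      Real.Gamma (x + ∑ i, (k i : ℝ)) / (Real.Gamma x * ∏ i, ((k i).factorial : ℝ)) *
        (Real.Gamma (α0 + ∑ i, α i) * Real.Gamma (x + α0) /
          (Real.Gamma α0 * Real.Gamma (x + ∑ i, (k i : ℝ) + (α0 + ∑ i, α i)))) *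
        ∏ i, (ascPochhammer ℝ (k i)).eval (α i) := by
  have hΓα : ∀ i, Real.Gamma (α i) ≠ 0 := fun i => (Real.Gamma_pos_of_pos (hα i)).ne'
  simp only [dnmPmf, fun i => Real.Gamma_natCast_add_eq_mul_ascPochhammer (hα i) (k i),
    Finset.prod_mul_distrib]
  have := (Real.Gamma_pos_of_pos hα0).ne'
  have := Finset.prod_ne_zero_iff.mpr fun i (_ : i ∈ Finset.univ) => hΓα i
  field_simp

section Hazard

variable {m : ℕ} {r : Fin m → ℝ → ℝ} {t : ℝ}

theorem hasDerivAt_sum_integral (hr : ∀ i, Continuous (r i)) :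
    HasDerivAt (fun h => ∑ j, ∫ s in t..(t + h), r j s) (∑ j, r j t) 0 := by
  refine HasDerivAt.fun_sum fun j _ => ?_
  have hFTC : HasDerivAt (fun u => ∫ s in t..u, r j s) (r j t) (t + 0) := by
    rw [add_zero]
    exact intervalIntegral.integral_hasDerivAt_right ((hr j).intervalIntegrable t t)
      (hr j).stronglyMeasurable.stronglyMeasurableAtFilter (hr j).continuousAt
  simpa using hFTC.comp_const_add t 0

theorem pmain_zero (i : Fin m) : pmain m r t 0 i = 0 := by
  simp [pmain]

theorem hasDerivAt_pmain (hr : ∀ i, Continuous (r i)) (hR : ∑ j, r j t ≠ 0) (i : Fin m) :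
    HasDerivAt (fun h => pmain m r t h i) (r i t) 0 := by
  have hexp := ((hasDerivAt_sum_integral (t := t) hr).fun_neg.exp).const_sub 1
  refine ((hexp.mul_const (r i t)).div_const (∑ j, r j t)).congr_deriv ?_
  simp only [add_zero, intervalIntegral.integral_same, Finset.sum_const_zero, neg_zero,
    Real.exp_zero]
  field_simp

theorem tendsto_pmain_div (hr : ∀ i, Continuous (r i)) (hR : ∑ j, r j t ≠ 0) (i : Fin m) :
    Tendsto (fun h => pmain m r t h i / h) (𝓝[>] 0) (𝓝 (r i t)) := by
  refine ((hasDerivAt_iff_tendsto_slope.mp (hasDerivAt_pmain hr hR i)).mono_left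
    (nhdsWithin_mono 0 fun y hy => ne_of_gt hy)).congr fun h => ?_
  rw [slope_def_field, pmain_zero, sub_zero, sub_zero]

theorem tendsto_pmain (hr : ∀ i, Continuous (r i)) (hR : ∑ j, r j t ≠ 0) (i : Fin m) :
    Tendsto (fun h => pmain m r t h i) (𝓝 0) (𝓝 0) := by
  simpa [pmain_zero] using (hasDerivAt_pmain hr hR i).continuousAt.tendsto

theorem tendsto_pzero (hr : ∀ i, Continuous (r i)) (hR : ∑ j, r j t ≠ 0) :
    Tendsto (fun h => pzero m r t h) (𝓝 0) (𝓝 1) := by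
  simpa [pzero] using
    tendsto_const_nhds.sub (tendsto_finsetSum Finset.univ fun i _ => tendsto_pmain hr hR i)

theorem pmain_pos [Nonempty (Fin m)] (hr : ∀ i, Continuous (r i)) (hr_pos : ∀ i s, 0 < r i s)
    {h : ℝ} (hh : 0 < h) (i : Fin m) : 0 < pmain m r t h i := by
  have hI : 0 < ∑ j, ∫ s in t..(t + h), r j s :=
    Finset.sum_pos (fun j _ => intervalIntegral.intervalIntegral_pos_of_pos
      ((hr j).intervalIntegrable _ _) (hr_pos j) (by linarith)) Finset.univ_nonempty
  have hexp : Real.exp (-∑ j, ∫ s in t..(t + h), r j s) < 1 := Real.exp_lt_one_iff.mpr (by linarith)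
  exact div_pos (mul_pos (by linarith) (hr_pos i t))
    (Finset.sum_pos (fun j _ => hr_pos j t) Finset.univ_nonempty)

end Hazard

open Polynomial in
theorem tendsto_dnmPmf_div {m : ℕ} {r : Fin m → ℝ → ℝ} (hr : ∀ i, Continuous (r i))
    (hr_pos : ∀ i s, 0 < r i s) {t c x : ℝ} (hc : 0 < c) (hx : 0 < x) {k : Fin m → ℕ}
    {i₀ : Fin m} {n : ℕ} (hk : k i₀ = n + 1) :
    Tendsto (fun h => dnmPmf m x (c * pzero m r t h) (fun i => c * pmain m r t h i) k / h)
      (𝓝[>] 0)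
      (𝓝 (Real.Gamma (x + ∑ i, (k i : ℝ)) / (Real.Gamma x * ∏ i, ((k i).factorial : ℝ)) *
        (Real.Gamma (x + c) / Real.Gamma (x + ∑ i, (k i : ℝ) + c)) *
        (c * r i₀ t * n.factorial *
          ∏ i ∈ Finset.univ.erase i₀, (ascPochhammer ℝ (k i)).eval 0))) := by
  have : Nonempty (Fin m) := ⟨i₀⟩
  have hR : ∑ j, r j t ≠ 0 := (Finset.sum_pos (fun j _ => hr_pos j t) Finset.univ_nonempty).ne'
  have hsum : ∀ h, c * pzero m r t h + ∑ i, c * pmain m r t h i = c := fun h => by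
    rw [← Finset.mul_sum, ← mul_add, pzero, sub_add_cancel, mul_one]
  have hα0 : Tendsto (fun h => c * pzero m r t h) (𝓝[>] 0) (𝓝 c) := by
    simpa using ((tendsto_pzero hr hR).const_mul c).mono_left nhdsWithin_le_nhds
  have hΓ : Tendsto (fun h => Real.Gamma (x + c * pzero m r t h) / Real.Gamma (c * pzero m r t h))
      (𝓝[>] 0) (𝓝 (Real.Gamma (x + c) / Real.Gamma c)) :=
    ((Real.continuousAt_Gamma_of_pos (by linarith)).tendsto.comp (hα0.const_add x)).div
      ((Real.continuousAt_Gamma_of_pos hc).tendsto.comp hα0) (Real.Gamma_pos_of_pos hc).ne'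
  have hprod := tendsto_prod_ascPochhammer_eval_div (l := 𝓝[>] 0)
    (fun i => by simpa using ((tendsto_pmain hr hR i).const_mul c).mono_left nhdsWithin_le_nhds)
    hk (by simpa only [mul_div_assoc] using (tendsto_pmain_div hr hR i₀).const_mul c)
  have hlim := ((tendsto_const_nhds (x := Real.Gamma (x + ∑ i, (k i : ℝ)) /
    (Real.Gamma x * ∏ i, ((k i).factorial : ℝ)) * Real.Gamma c /
    Real.Gamma (x + ∑ i, (k i : ℝ) + c))).mul hΓ).mul hprod
  have hΓc := (Real.Gamma_pos_of_pos hc).ne'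
  refine (hlim.congr' ?_).trans_eq ?_
  · filter_upwards [self_mem_nhdsWithin, hα0.eventually (eventually_gt_nhds hc)] with h hh hpos
    rw [dnmPmf_eq_mul_prod_ascPochhammer hpos fun i => mul_pos hc (pmain_pos hr hr_pos hh i),
      hsum]
    field_simp
  · field_simp

theorem dnm_transition_rates_general
    (m : ℕ) (r : Fin m → ℝ → ℝ)
    (hr_cont : ∀ i, Continuous (r i)) (hr_pos : ∀ i s, 0 < r i s)
    (t c : ℝ) (hc : 0 < c) (x : ℝ) (hx : 0 < x) (k : Fin m → ℕ) :
    (2 ≤ (Finset.univ.filter fun i : Fin m => 1 ≤ k i).card →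
      (fun h : ℝ => dnmPmf m x (c * pzero m r t h) (fun i' => c * pmain m r t h i') k)
        =o[𝓝[>] (0 : ℝ)] (fun h => h)) ∧
    (∀ i : Fin m, (Finset.univ.filter fun i' : Fin m => 1 ≤ k i') = {i} →
      (fun h : ℝ =>
          dnmPmf m x (c * pzero m r t h) (fun i' => c * pmain m r t h i') k
            - c * (Real.Gamma (x + (k i : ℝ))
                  / (Real.Gamma x * ((k i).factorial : ℝ))) *
                (Real.Gamma (x + c) * Real.Gamma (k i : ℝ)
                  / Real.Gamma (x + (k i : ℝ) + c)) * r i t * h)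
        =o[𝓝[>] (0 : ℝ)] (fun h => h)) := by
  refine ⟨fun hcard => ?_, fun i hsupp => ?_⟩
  · obtain ⟨i, hi, j, hj, hij⟩ := Finset.one_lt_card.mp hcard
    obtain ⟨n, hn⟩ := Nat.exists_eq_add_of_le' (Finset.mem_filter.mp hi).2
    have hlim := tendsto_dnmPmf_div (t := t) hr_cont hr_pos hc hx hn
    rw [Finset.prod_eq_zero (Finset.mem_erase.mpr ⟨hij.symm, Finset.mem_univ j⟩)
      (by simp [Nat.one_le_iff_ne_zero.mp (Finset.mem_filter.mp hj).2]),
      mul_zero, mul_zero] at hlim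
    simpa using isLittleO_sub_mul_of_tendsto_div hlim
  · have hk_eq : ∀ j, j ≠ i → k j = 0 := fun j hj => by
      by_contra hkj
      exact hj (Finset.eq_singleton_iff_unique_mem.mp hsupp |>.2 j
        (Finset.mem_filter.mpr ⟨Finset.mem_univ j, Nat.one_le_iff_ne_zero.mpr hkj⟩))
    have hi : i ∈ Finset.univ.filter fun i' => 1 ≤ k i' := hsupp ▸ Finset.mem_singleton_self i
    obtain ⟨n, hn⟩ := Nat.exists_eq_add_of_le' (Finset.mem_filter.mp hi).2
    have hlim := tendsto_dnmPmf_div (t := t) hr_cont hr_pos hc hx hn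
    rw [Finset.sum_eq_single i (fun j _ hj => by simp [hk_eq j hj]) (by simp),
      Finset.prod_eq_single i (fun j _ hj => by simp [hk_eq j hj]) (by simp),
      Finset.prod_eq_one fun j hj => by simp [hk_eq j (Finset.ne_of_mem_erase hj)]] at hlim
    convert isLittleO_sub_mul_of_tendsto_div hlim using 3
    rw [hn, Nat.cast_succ, Real.Gamma_nat_eq_factorial]
    ring

/-- for `x > 0`, `c > 0`, and
`(Δ_1^h,…,Δ_m^h) ~ DNM(x; cπ_0(h), cπ_1(h),…,cπ_m(h))`, fix `(k_1,…,k_m)` and let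
`S̄ = {i : k_i ≥ 1}`.  If `|S̄| ≥ 2` then `P(Δ^h = k) = o(h)`; if `S̄ = {i}` with
`k_i = k ≥ 1` then
`P(Δ^h = k) = c·[Γ(x+k)/(Γ(x)k!)]·[Γ(x+c)Γ(k)/Γ(x+k+c)]·r_i(t)·h + o(h)`
as `h → 0+`. -/
theorem dnm_transition_rates
    (m : ℕ) (hm : 1 ≤ m) (r : Fin m → ℝ → ℝ)
    (hr_cont : ∀ i, Continuous (r i)) (hr_pos : ∀ i s, 0 < r i s)
    (t c : ℝ) (hc : 0 < c) (x : ℝ) (hx : 0 < x) (k : Fin m → ℕ) :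
    (2 ≤ (Finset.univ.filter fun i : Fin m => 1 ≤ k i).card →
      (fun h : ℝ => dnmPmf m x (c * pzero m r t h) (fun i' => c * pmain m r t h i') k)
        =o[𝓝[>] (0 : ℝ)] (fun h => h)) ∧
    (∀ i : Fin m, (Finset.univ.filter fun i' : Fin m => 1 ≤ k i') = {i} →
      (fun h : ℝ =>
          dnmPmf m x (c * pzero m r t h) (fun i' => c * pmain m r t h i') k
            - c * (Real.Gamma (x + (k i : ℝ))
                  / (Real.Gamma x * ((k i).factorial : ℝ))) *
                (Real.Gamma (x + c) * Real.Gamma (k i : ℝ)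
                  / Real.Gamma (x + (k i : ℝ) + c)) * r i t * h)
        =o[𝓝[>] (0 : ℝ)] (fun h => h)) :=
  dnm_transition_rates_general m r hr_cont hr_pos t c hc x hx k
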